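/- arXiv:1906.07486 — 5 statements merged into one kernel-verified Lean document; each statement's English description precedes it below -/
import Mathlib

section
/- The equation r = 1 + 1/√(1 + 1/r²) has a unique solution r in (1, ∞), namely r = (1 + √2 + √(2√2 − 1))/2, and this r satisfies r⁴ − 2r³ + r² − 2r + 1 = 0. -/
/-- The equation r = 1 + 1/√(1 + 1/r²) has a unique solution in (1,∞),
namely r₀ = (1 + √2 + √(2√2 − 1))/2, which satisfies r⁴ − 2r³ + r² − 2r + 1 = 0. -/
theorem stmt_14 :
    let r₀ : ℝ := (1 + Real.sqrt 2 + Real.sqrt (2 * Real.sqrt 2 - 1)) / 2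
    1 < r₀ ∧
    (∀ r : ℝ, 1 < r → (r = 1 + 1 / Real.sqrt (1 + 1 / r ^ 2) ↔ r = r₀)) ∧
    r₀ ^ 4 - 2 * r₀ ^ 3 + r₀ ^ 2 - 2 * r₀ + 1 = 0 := by
  have hs2 : Real.sqrt 2 ^ 2 = 2 := Real.sq_sqrt (by norm_num)
  have hs1 : 1 < Real.sqrt 2 := by nlinarith [Real.sqrt_nonneg 2]
  have ht0 : 0 ≤ Real.sqrt (2 * Real.sqrt 2 - 1) := Real.sqrt_nonneg _
  have ht2 : Real.sqrt (2 * Real.sqrt 2 - 1) ^ 2 = 2 * Real.sqrt 2 - 1 :=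
    Real.sq_sqrt (by nlinarith)
  set s := Real.sqrt 2 with hs
  set t := Real.sqrt (2 * s - 1) with ht
  intro r₀
  have hr₀ : r₀ = (1 + s + t) / 2 := rfl
  have h1 : 1 < r₀ := by rw [hr₀]; nlinarith
  have hq₀ : r₀ ^ 4 - 2 * r₀ ^ 3 + r₀ ^ 2 - 2 * r₀ + 1 = 0 := by
    have hfirst : r₀ ^ 2 - (1 + s) * r₀ + 1 = 0 := by
      rw [hr₀]; linear_combination (1/4) * ht2 - (1/4) * hs2
    linear_combination (r₀ ^ 2 - (1 - s) * r₀ + 1) * hfirst + r₀ ^ 2 * hs2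
  refine ⟨h1, ?_, hq₀⟩
  intro r hr
  have hr0 : 0 < r := lt_trans one_pos hr
  have hx : (0:ℝ) < 1 + 1 / r ^ 2 := by positivity
  have hsx : 0 < Real.sqrt (1 + 1 / r ^ 2) := Real.sqrt_pos.mpr hx
  have hsx2 : Real.sqrt (1 + 1 / r ^ 2) ^ 2 = 1 + 1 / r ^ 2 := Real.sq_sqrt hx.le
  constructor
  · intro he
    have h2 : (r - 1) * Real.sqrt (1 + 1 / r ^ 2) = 1 := by
      have hd : r - 1 = 1 / Real.sqrt (1 + 1 / r ^ 2) := by linarith [he]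
      rw [hd, one_div, inv_mul_cancel₀ (ne_of_gt hsx)]
    have h3 : (r - 1) ^ 2 * (1 + 1 / r ^ 2) = 1 := by
      rw [← hsx2]
      linear_combination ((r - 1) * Real.sqrt (1 + 1 / r ^ 2) + 1) * h2
    have h4 : (r - 1) ^ 2 * (r ^ 2 + 1) = r ^ 2 := by
      field_simp at h3
      linarith [h3]
    have hq : r ^ 4 - 2 * r ^ 3 + r ^ 2 - 2 * r + 1 = 0 := by linear_combination h4
    have hfac : (r ^ 2 - (1 + s) * r + 1) * (r ^ 2 - (1 - s) * r + 1) = 0 := by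
      linear_combination hq - r ^ 2 * hs2
    have hpos2 : 0 < r ^ 2 - (1 - s) * r + 1 := by nlinarith
    have hfirst : r ^ 2 - (1 + s) * r + 1 = 0 := by
      rcases mul_eq_zero.mp hfac with h | h
      · exact h
      · exact absurd h (ne_of_gt hpos2)
    have h5 : (2 * r - 1 - s) ^ 2 = t ^ 2 := by
      linear_combination 4 * hfirst + hs2 - ht2
    have h6 : (2 * r - 1 - s - t) * (2 * r - 1 - s + t) = 0 := by
      linear_combination h5
    rcases mul_eq_zero.mp h6 with h | h
    · rw [hr₀]; linarith
    · exfalso; nlinarith [sq_nonneg (s - 1 - t)]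
  · intro he
    subst he
    have hx₀ : (0:ℝ) < 1 + 1 / r₀ ^ 2 := hx
    have key : (r₀ - 1) ^ 2 * (1 + 1 / r₀ ^ 2) = 1 := by
      have hne : r₀ ≠ 0 := by positivity
      field_simp
      linear_combination hq₀
    have k2 : ((r₀ - 1) * Real.sqrt (1 + 1 / r₀ ^ 2)) ^ 2 = 1 := by
      rw [mul_pow, hsx2]; exact key
    have hpos : 0 < (r₀ - 1) * Real.sqrt (1 + 1 / r₀ ^ 2) := by
      apply mul_pos (by linarith) hsx
    have h7 : ((r₀ - 1) * Real.sqrt (1 + 1 / r₀ ^ 2) - 1) *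
        ((r₀ - 1) * Real.sqrt (1 + 1 / r₀ ^ 2) + 1) = 0 := by
      linear_combination k2
    have h8 : (r₀ - 1) * Real.sqrt (1 + 1 / r₀ ^ 2) = 1 := by
      rcases mul_eq_zero.mp h7 with h | h
      · linarith
      · exfalso; nlinarith
    have hne : Real.sqrt (1 + 1 / r₀ ^ 2) ≠ 0 := ne_of_gt hsx
    have h9 : 1 / Real.sqrt (1 + 1 / r₀ ^ 2) = r₀ - 1 := by
      rw [div_eq_iff hne]; linarith [h8]
    rw [h9]; ring
end

section
/- Let (X, 𝒜) be a measurable space and h, v : X → X injective bi-measurable maps with {h(X), v(X)} a partition of X. Let B ∈ 𝒜 be such that X = ⋃_{w ∈ ℳ(h,v)} w(B), where ℳ(h,v) is the monoid (including the identity) generated by h and v. If μ and ν are two measures on X, each invariant under h and v (i.e., μ(gA) = μ(A) for g ∈ {h,v} and all measurable A), and μ = ν on all measurable subsets of B, then μ = ν on X. -/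
/-!
Every word `w ∈ ℳ(h,v)` is measurable, maps measurable sets to measurable sets and preserves
both measures, so `μ` and `ν` agree on the measurable subsets of `w(B)`: such a set is
`A ∩ w(B) = w(w⁻¹A ∩ B)`, and `w⁻¹A ∩ B ⊆ B`. The monoid `ℳ(h,v)` is countable and the sets
`w(B)` cover `X`, so the restrictions of `μ` and `ν` to a countable cover coincide.
-/

open MeasureTheory Set

theorem Set.Countable.submonoidClosure {M : Type*} [Monoid M] {s : Set M} (hs : s.Countable) :
    (Submonoid.closure s : Set M).Countable := by
  have := hs.to_subtype
  rw [Submonoid.closure_eq_mrange, MonoidHom.coe_mrange]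
  exact countable_range _

namespace MeasureTheory.Measure

variable {X : Type*} [MeasurableSpace X]

def ImagePreserving (μ : Measure X) (g : X → X) : Prop :=
  Measurable g ∧ ∀ A, MeasurableSet A → MeasurableSet (g '' A) ∧ μ (g '' A) = μ A

theorem imagePreserving_id (μ : Measure X) : ImagePreserving μ id :=
  ⟨measurable_id, fun A hA => by simpa using hA⟩

theorem ImagePreserving.comp {μ : Measure X} {g f : X → X} (hg : ImagePreserving μ g)
    (hf : ImagePreserving μ f) : ImagePreserving μ (g ∘ f) := by
  refine ⟨hg.1.comp hf.1, fun A hA => ?_⟩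
  obtain ⟨hfA, hfA_eq⟩ := hf.2 A hA
  obtain ⟨hgfA, hgfA_eq⟩ := hg.2 _ hfA
  rw [image_comp]
  exact ⟨hgfA, hgfA_eq.trans hfA_eq⟩

def imagePreservingSubmonoid (μ : Measure X) : Submonoid (Function.End X) where
  carrier := {g | ImagePreserving μ g}
  one_mem' := imagePreserving_id μ
  mul_mem' hg hf := hg.comp hf

theorem restrict_image_eq_of_imagePreserving {μ ν : Measure X} {g : X → X}
    (hμ : ImagePreserving μ g) (hν : ImagePreserving ν g) {B : Set X} (hB : MeasurableSet B)
    (hagree : ∀ A, MeasurableSet A → A ⊆ B → μ A = ν A) :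
    μ.restrict (g '' B) = ν.restrict (g '' B) := by
  ext A hA
  have hS : MeasurableSet (g ⁻¹' A ∩ B) := (hμ.1 hA).inter hB
  rw [restrict_apply hA, restrict_apply hA, ← image_preimage_inter, (hμ.2 _ hS).2,
    (hν.2 _ hS).2, hagree _ hS inter_subset_right]

theorem ext_of_biUnion_image_eq_univ {μ ν : Measure X} {S : Set (Function.End X)}
    (hS : S.Countable) (hμ : S ⊆ imagePreservingSubmonoid μ)
    (hν : S ⊆ imagePreservingSubmonoid ν) {B : Set X} (hB : MeasurableSet B)
    (hcover : ⋃ g ∈ S, g '' B = univ) (hagree : ∀ A, MeasurableSet A → A ⊆ B → μ A = ν A) :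
    μ = ν :=
  (ext_iff_of_biUnion_eq_univ hS hcover).2 fun _ hg =>
    restrict_image_eq_of_imagePreserving (hμ hg) (hν hg) hB hagree

end MeasureTheory.Measure

theorem stmt_15_general {X : Type*} [MeasurableSpace X] (h v : X → X)
    (hmeas : Measurable h) (vmeas : Measurable v)
    (hbi : ∀ A : Set X, MeasurableSet A → MeasurableSet (h '' A))
    (vbi : ∀ A : Set X, MeasurableSet A → MeasurableSet (v '' A))
    (B : Set X) (hB : MeasurableSet B)
    (hBcover : ⋃ w ∈ (Submonoid.closure {(h : Function.End X), v} :
      Submonoid (Function.End X)), w '' B = Set.univ)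
    (μ ν : Measure X)
    (hμh : ∀ A : Set X, MeasurableSet A → μ (h '' A) = μ A)
    (hμv : ∀ A : Set X, MeasurableSet A → μ (v '' A) = μ A)
    (hνh : ∀ A : Set X, MeasurableSet A → ν (h '' A) = ν A)
    (hνv : ∀ A : Set X, MeasurableSet A → ν (v '' A) = ν A)
    (hagree : ∀ A : Set X, MeasurableSet A → A ⊆ B → μ A = ν A) :
    μ = ν := by
  have hcountable : (Submonoid.closure ({h, v} : Set (Function.End X)) :
      Set (Function.End X)).Countable :=
    ((countable_singleton _).insert _).submonoidClosure
  have closure_le {ρ : Measure X} (hρh : ∀ A, MeasurableSet A → ρ (h '' A) = ρ A)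
      (hρv : ∀ A, MeasurableSet A → ρ (v '' A) = ρ A) :
      Submonoid.closure ({h, v} : Set (Function.End X)) ≤ Measure.imagePreservingSubmonoid ρ :=
    Submonoid.closure_le.2 <| insert_subset_iff.2
      ⟨⟨hmeas, fun A hA => ⟨hbi A hA, hρh A hA⟩⟩,
        singleton_subset_iff.2 ⟨vmeas, fun A hA => ⟨vbi A hA, hρv A hA⟩⟩⟩
  exact Measure.ext_of_biUnion_image_eq_univ hcountable (closure_le hμh hμv) (closure_le hνh hνv)
    hB hBcover hagree

/-- Uniqueness of invariant extensions: if X = ⋃_{w ∈ ℳ(h,v)} w(B) and μ, ν are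
{h,v}-invariant measures agreeing on B, then μ = ν. -/
theorem stmt_15 {X : Type*} [MeasurableSpace X] (h v : X → X)
    (hinj : Function.Injective h) (vinj : Function.Injective v)
    (hmeas : Measurable h) (vmeas : Measurable v)
    (hbi : ∀ A : Set X, MeasurableSet A → MeasurableSet (h '' A))
    (vbi : ∀ A : Set X, MeasurableSet A → MeasurableSet (v '' A))
    (hdisj : Disjoint (Set.range h) (Set.range v))
    (hcover : Set.range h ∪ Set.range v = Set.univ)
    (B : Set X) (hB : MeasurableSet B)
    (hBcover : ⋃ w ∈ (Submonoid.closure {(h : Function.End X), v} :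
      Submonoid (Function.End X)), w '' B = Set.univ)
    (μ ν : Measure X)
    (hμh : ∀ A : Set X, MeasurableSet A → μ (h '' A) = μ A)
    (hμv : ∀ A : Set X, MeasurableSet A → μ (v '' A) = μ A)
    (hνh : ∀ A : Set X, MeasurableSet A → ν (h '' A) = ν A)
    (hνv : ∀ A : Set X, MeasurableSet A → ν (v '' A) = ν A)
    (hagree : ∀ A : Set X, MeasurableSet A → A ⊆ B → μ A = ν A) :
    μ = ν :=
  stmt_15_general h v hmeas vmeas hbi vbi B hB hBcover μ ν hμh hμv hνh hνv hagree
end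

section
/- Let (X, 𝒜) be a measurable space, h, v : X → X injective bi-measurable maps with h(X) and v(X) forming a partition of X, and B ∈ 𝒜 with X = ⋃_{w ∈ ℳ(h,v)} w(B). Then every ℳ(h,v)-invariant measure μ on B (meaning μ(wA) = μ(A) whenever A ⊆ B measurable, w ∈ ℳ(h,v), and wA ⊆ B) extends to a measure ν on X invariant under h and v, given by ν(A) = Σ_{w ∈ ℳ(h,v)} μ(w⁻¹(A ∩ X_w)). -/
open MeasureTheory Set
open scoped ENNReal

namespace Stmt16Aux

variable {X : Type*}

/-- Evaluation of a word in the free monoid on two maps. -/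
def ev (h v : X → X) : List Bool → X → X
  | [] => id
  | b :: l => (if b then h else v) ∘ ev h v l

theorem ev_nil (h v : X → X) : ev h v [] = id := rfl

theorem ev_cons (h v : X → X) (b : Bool) (l : List Bool) :
    ev h v (b :: l) = (if b then h else v) ∘ ev h v l := rfl

theorem ev_append (h v : X → X) (w₁ w₂ : List Bool) :
    ev h v (w₁ ++ w₂) = ev h v w₁ ∘ ev h v w₂ := by
  induction w₁ with
  | nil => rfl
  | cons b l ih => simp [ev_cons, ih, Function.comp_assoc]

def consEquiv : Bool × List Bool ≃ (({[]}ᶜ : Set (List Bool))) where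
  toFun p := ⟨p.1 :: p.2, by simp⟩
  invFun w := ((w : List Bool).headI, (w : List Bool).tail)
  left_inv p := by simp
  right_inv w := by
    rcases w with ⟨w, hw⟩
    have hw' : w ≠ [] := by simpa using hw
    apply Subtype.ext
    rcases w with _ | ⟨b, l⟩
    · exact absurd rfl hw'
    · rfl

theorem tsum_list_bool (F : List Bool → ℝ≥0∞) :
    ∑' w, F w = F [] + ∑' p : Bool × List Bool, F (p.1 :: p.2) := by
  classical
  have e : Bool × List Bool ≃ (({[]}ᶜ : Set (List Bool))) := consEquiv
  have h1 : ∑' w : (({[]}ᶜ : Set (List Bool))), F ↑w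
      = ∑' p : Bool × List Bool, F (p.1 :: p.2) := by
    rw [← consEquiv.tsum_eq (fun w : (({[]}ᶜ : Set (List Bool))) => F ↑w)]
    rfl
  rw [← Summable.tsum_add_tsum_compl (s := ({[]} : Set (List Bool)))
    ENNReal.summable ENNReal.summable, tsum_singleton, h1]

end Stmt16Aux

open Stmt16Aux

/-- Extension of invariant measures: if X = ⋃_{w ∈ ℳ(h,v)} w(B) and μ is a
measure on B invariant under the monoid ℳ(h,v), then μ extends to a measure on
X invariant under h and v. -/
theorem stmt_16 {X : Type*} [MeasurableSpace X] (h v : X → X)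
    (hinj : Function.Injective h) (vinj : Function.Injective v)
    (hmeas : Measurable h) (vmeas : Measurable v)
    (hbi : ∀ A : Set X, MeasurableSet A → MeasurableSet (h '' A))
    (vbi : ∀ A : Set X, MeasurableSet A → MeasurableSet (v '' A))
    (hdisj : Disjoint (Set.range h) (Set.range v))
    (hcover : Set.range h ∪ Set.range v = Set.univ)
    (B : Set X) (hB : MeasurableSet B)
    (hBcover : ⋃ w ∈ (Submonoid.closure {(h : Function.End X), v} :
      Submonoid (Function.End X)), w '' B = Set.univ)
    (μ : Measure X)
    (hμinv : ∀ A : Set X, MeasurableSet A → A ⊆ B →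
      ∀ w ∈ (Submonoid.closure {(h : Function.End X), v} : Submonoid (Function.End X)),
        w '' A ⊆ B → μ (w '' A) = μ A) :
    ∃ ν : Measure X,
      (∀ A : Set X, MeasurableSet A → A ⊆ B → ν A = μ A) ∧
      (∀ A : Set X, MeasurableSet A → ν (h '' A) = ν A) ∧
      (∀ A : Set X, MeasurableSet A → ν (v '' A) = ν A) := by
  classical
  set g : Bool → X → X := fun b => if b then h else v with hg
  have gT : g true = h := rfl
  have gF : g false = v := rfl
  have ginj : ∀ b, Function.Injective (g b) := by rintro (_ | _) <;> simpa [g]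
  have gmeas : ∀ b, Measurable (g b) := by rintro (_ | _) <;> simpa [g]
  have gbi : ∀ b (A : Set X), MeasurableSet A → MeasurableSet (g b '' A) := by
    rintro (_ | _) <;> simpa [g]
  have hd : ∀ x : X, x ∈ Set.range h → x ∈ Set.range v → False := fun x h1 h2 =>
    Set.disjoint_left.mp hdisj h1 h2
  have gdisj : ∀ ⦃x : X⦄ ⦃b b' : Bool⦄, x ∈ Set.range (g b) → x ∈ Set.range (g b') → b = b' := by
    rintro x (_ | _) (_ | _) h1 h2
    · rfl
    · exact ((hd x (by simpa [g] using h2) (by simpa [g] using h1))).elim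
    · exact ((hd x (by simpa [g] using h1) (by simpa [g] using h2))).elim
    · rfl
  have evsurj : ∀ f ∈ (Submonoid.closure {(h : Function.End X), v} :
      Submonoid (Function.End X)), ∃ w : List Bool, ev h v w = (f : X → X) := by
    intro f hf
    induction hf using Submonoid.closure_induction with
    | mem y hy =>
      rcases hy with rfl | rfl
      · exact ⟨[true], rfl⟩
      · exact ⟨[false], rfl⟩
    | one => exact ⟨[], rfl⟩
    | mul f₁ f₂ _ _ ih1 ih2 =>
      rcases ih1 with ⟨w₁, hw₁⟩
      rcases ih2 with ⟨w₂, hw₂⟩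
      refine ⟨w₁ ++ w₂, ?_⟩
      rw [ev_append, hw₁, hw₂]
      rfl
  have Xw_cover_S : ∀ x : X, ∃ w : List Bool, x ∈ ev h v w '' B := by
    intro x
    have hx : x ∈ ⋃ w ∈ (Submonoid.closure {(h : Function.End X), v} :
        Submonoid (Function.End X)), w '' B := hBcover ▸ Set.mem_univ x
    rcases Set.mem_iUnion₂.mp hx with ⟨f, hf, hxf⟩
    rcases evsurj f hf with ⟨w, hw⟩
    refine ⟨w, ?_⟩
    rw [hw]
    exact hxf
  -- basic properties of ev
  have evinj : ∀ w, Function.Injective (ev h v w) := by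
    intro w
    induction w with
    | nil => exact fun _ _ hx => hx
    | cons b l ih => exact (ginj b).comp ih
  have evmeas : ∀ w, Measurable (ev h v w) := by
    intro w
    induction w with
    | nil => exact measurable_id
    | cons b l ih => exact (gmeas b).comp ih
  have evim : ∀ w (A : Set X), MeasurableSet A → MeasurableSet (ev h v w '' A) := by
    intro w
    induction w with
    | nil =>
      intro A hA
      rw [ev_nil, Set.image_id]
      exact hA
    | cons b l ih =>
      intro A hA
      rw [ev_cons, Set.image_comp]
      exact gbi b _ (ih A hA)
  have evmem : ∀ w, (ev h v w : Function.End X) ∈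
      (Submonoid.closure {(h : Function.End X), v} : Submonoid (Function.End X)) := by
    intro w
    induction w with
    | nil =>
      show (1 : Function.End X) ∈ (Submonoid.closure {(h : Function.End X), v} :
        Submonoid (Function.End X))
      exact Submonoid.one_mem _
    | cons b l ih =>
      have hgb : g b ∈ (Submonoid.closure {(h : Function.End X), v} :
          Submonoid (Function.End X)) := by
        refine Submonoid.subset_closure ?_
        cases b
        · exact Or.inr rfl
        · exact Or.inl rfl
      have hmul : ∀ f₁ f₂ : Function.End X,
          f₁ ∈ (Submonoid.closure {(h : Function.End X), v} : Submonoid (Function.End X)) →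
          f₂ ∈ (Submonoid.closure {(h : Function.End X), v} : Submonoid (Function.End X)) →
          f₁ * f₂ ∈ (Submonoid.closure {(h : Function.End X), v} :
            Submonoid (Function.End X)) :=
        fun f₁ f₂ h₁ h₂ => mul_mem h₁ h₂
      exact hmul (g b) (ev h v l) hgb ih
  -- chain property
  have chain : ∀ (w w' : List Bool) (x y : X), ev h v w x = ev h v w' y →
      w <+: w' ∨ w' <+: w := by
    intro w
    induction w with
    | nil => intro w' x y _; exact Or.inl List.nil_prefix
    | cons b l ih =>
      intro w' x y hxy
      rcases w' with _ | ⟨b', l'⟩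
      · exact Or.inr List.nil_prefix
      · have h1 : ev h v (b :: l) x ∈ Set.range (g b) := ⟨ev h v l x, rfl⟩
        have h2 : ev h v (b :: l) x ∈ Set.range (g b') := by
          rw [hxy]; exact ⟨ev h v l' y, rfl⟩
        have hb : b = b' := gdisj h1 h2
        subst hb
        have hxy' : ev h v l x = ev h v l' y := ginj b hxy
        rcases ih l' x y hxy' with h1 | h1
        · exact Or.inl (List.cons_prefix_cons.mpr ⟨rfl, h1⟩)
        · exact Or.inr (List.cons_prefix_cons.mpr ⟨rfl, h1⟩)
  -- the pieces of the partition
  set S : List Bool → Set X := fun w => ev h v w '' B with hS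
  set Xw : List Bool → Set X :=
    fun w => S w \ ⋃ (w' : List Bool) (_ : w' <+: w ∧ w' ≠ w), S w' with hXw
  have mem_Xw : ∀ (w : List Bool) (x : X),
      x ∈ Xw w ↔ x ∈ S w ∧ ∀ w', (w' <+: w ∧ w' ≠ w) → x ∉ S w' := by
    intro w x
    simp only [hXw, Set.mem_diff, Set.mem_iUnion, not_exists]
  have Xw_meas : ∀ w, MeasurableSet (Xw w) := by
    intro w
    exact (evim w B hB).diff
      (MeasurableSet.iUnion fun w' => MeasurableSet.iUnion fun _ => evim w' B hB)
  have Xw_subset : ∀ w, Xw w ⊆ S w := fun w => Set.diff_subset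
  have Xw_nil : Xw [] = B := by
    ext x
    rw [mem_Xw]
    constructor
    · intro hx
      rcases hx.1 with ⟨a, ha, hax⟩
      rwa [show a = x from hax] at ha
    · intro hx
      refine ⟨⟨x, hx, rfl⟩, ?_⟩
      rintro w' ⟨h1, h2⟩ _
      exact h2 (List.prefix_nil.mp h1)
  have Xw_inter_B : ∀ w, w ≠ [] → Xw w ∩ B = ∅ := by
    intro w hw
    ext x
    simp only [Set.mem_inter_iff, Set.mem_empty_iff_false, iff_false, not_and]
    intro hx hxB
    exact ((mem_Xw w x).mp hx).2 [] ⟨List.nil_prefix, fun hh => hw hh.symm⟩ ⟨x, hxB, rfl⟩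
  -- every point is in some piece
  have Xw_cover : ∀ x : X, ∃ w, x ∈ Xw w := by
    intro x
    rcases Xw_cover_S x with ⟨w, hw⟩
    have key : ∀ n (w : List Bool), w.length ≤ n → x ∈ S w → ∃ u, x ∈ Xw u := by
      intro n
      induction n with
      | zero =>
        intro w hlen hxw
        have hwn : w = [] := List.length_eq_zero_iff.mp (Nat.le_zero.mp hlen)
        subst hwn
        refine ⟨[], (mem_Xw [] x).mpr ⟨hxw, ?_⟩⟩
        rintro w' ⟨h1, h2⟩ _
        exact h2 (List.prefix_nil.mp h1)
      | succ n ih =>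
        intro w hlen hxw
        by_cases hcase : ∃ w', (w' <+: w ∧ w' ≠ w) ∧ x ∈ S w'
        · rcases hcase with ⟨w', ⟨h1, h2⟩, h3⟩
          have hlt : w'.length < w.length :=
            lt_of_le_of_ne h1.length_le fun hl => h2 (h1.eq_of_length hl)
          exact ih w' (by omega) h3
        · refine ⟨w, (mem_Xw w x).mpr ⟨hxw, ?_⟩⟩
          rintro w' hw' h3
          exact hcase ⟨w', hw', h3⟩
    exact key w.length w le_rfl hw
  -- pieces are pairwise disjoint
  have key_disj : ∀ w w', w ≠ w' → w <+: w' → Disjoint (Xw w) (Xw w') := by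
    intro w w' hne hpre
    rw [Set.disjoint_left]
    intro x hxw hxw'
    exact ((mem_Xw w' x).mp hxw').2 w ⟨hpre, hne⟩ ((mem_Xw w x).mp hxw).1
  have Xw_disj : ∀ w w', w ≠ w' → Disjoint (Xw w) (Xw w') := by
    intro w w' hne
    by_cases hc : w <+: w'
    · exact key_disj w w' hne hc
    · rw [Set.disjoint_left]
      intro x hxw hxw'
      rcases (Xw_subset w hxw) with ⟨a, _, ha⟩
      rcases (Xw_subset w' hxw') with ⟨a', _, ha'⟩
      rcases chain w w' a a' (ha.trans ha'.symm) with hp | hp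
      · exact hc hp
      · exact Set.disjoint_left.mp (key_disj w' w (Ne.symm hne) hp) hxw' hxw
  -- key preimage identity
  have Xw_pre : ∀ (b : Bool) (l : List Bool),
      g b ⁻¹' (Xw (b :: l)) = Xw l \ g b ⁻¹' B := by
    intro b l
    ext x
    simp only [Set.mem_preimage, Set.mem_diff, mem_Xw]
    constructor
    · rintro ⟨hx1, hx2⟩
      have hxl : x ∈ S l := by
        rcases hx1 with ⟨a, ha, hax⟩
        exact ⟨a, ha, ginj b hax⟩
      refine ⟨⟨hxl, ?_⟩, ?_⟩
      · rintro l' ⟨h1, h2⟩ h3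
        refine hx2 (b :: l') ⟨List.cons_prefix_cons.mpr ⟨rfl, h1⟩,
          fun hh => h2 (by simpa using hh)⟩ ?_
        rcases h3 with ⟨a, ha, hax⟩
        exact ⟨a, ha, congrArg (g b) hax⟩
      · intro hxB
        exact hx2 [] ⟨List.nil_prefix, by simp⟩ ⟨g b x, hxB, rfl⟩
    · rintro ⟨⟨hx1, hx2⟩, hxB⟩
      constructor
      · rcases hx1 with ⟨a, ha, hax⟩
        exact ⟨a, ha, congrArg (g b) hax⟩
      · rintro w' ⟨h1, h2⟩ h3
        rcases w' with _ | ⟨b', l'⟩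
        · rcases h3 with ⟨a, haB, ha⟩
          exact hxB (show g b x ∈ B from (show a = g b x from ha) ▸ haB)
        · obtain ⟨rfl, hll⟩ := List.cons_prefix_cons.mp h1
          refine hx2 l' ⟨hll, fun hh => h2 (by rw [hh])⟩ ?_
          rcases h3 with ⟨a, ha, hax⟩
          exact ⟨a, ha, ginj _ hax⟩
  have Xw_range : ∀ b l, Xw (b :: l) ⊆ Set.range (g b) := by
    intro b l x hx
    rcases Xw_subset _ hx with ⟨a, _, ha⟩
    exact ⟨ev h v l a, ha⟩
  have evpreB : ∀ l, ev h v l ⁻¹' (Xw l) ⊆ B := by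
    intro l x hx
    rcases Xw_subset l hx with ⟨a, ha, hax⟩
    rwa [← evinj l hax]
  -- the measure
  set ν : Measure X := Measure.sum (fun w => (μ.map (ev h v w)).restrict (Xw w)) with hν
  have ν_apply : ∀ A : Set X, MeasurableSet A →
      ν A = ∑' w, μ (ev h v w ⁻¹' (A ∩ Xw w)) := by
    intro A hA
    rw [hν, Measure.sum_apply _ hA]
    refine tsum_congr fun w => ?_
    rw [Measure.restrict_apply hA, Measure.map_apply (evmeas w) (hA.inter (Xw_meas w))]
  -- main invariance
  have main : ∀ (b : Bool) (A : Set X), MeasurableSet A → ν (g b '' A) = ν A := by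
    intro b A hA
    have hgA : MeasurableSet (g b '' A) := gbi b A hA
    set Cpre : List Bool → Set X :=
      fun l => ev h v l ⁻¹' (A ∩ Xw l ∩ g b ⁻¹' B) with hCpre
    set Dpre : List Bool → Set X :=
      fun l => ev h v l ⁻¹' ((A ∩ Xw l) \ g b ⁻¹' B) with hDpre
    have hCm : ∀ l, MeasurableSet (Cpre l) :=
      fun l => evmeas l ((hA.inter (Xw_meas l)).inter (gmeas b hB))
    have hDm : ∀ l, MeasurableSet (Dpre l) :=
      fun l => evmeas l ((hA.inter (Xw_meas l)).diff (gmeas b hB))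
    have stepD : ∀ l, ev h v (b :: l) ⁻¹' (g b '' A ∩ Xw (b :: l)) = Dpre l := by
      intro l
      have h0 : ev h v (b :: l) ⁻¹' (g b '' A ∩ Xw (b :: l))
          = ev h v l ⁻¹' (g b ⁻¹' (g b '' A ∩ Xw (b :: l))) := rfl
      rw [h0, Set.preimage_inter, Set.preimage_image_eq A (ginj b), Xw_pre b l,
        ← Set.inter_diff_assoc]
    have stepO : ∀ b' l, b' ≠ b → g b '' A ∩ Xw (b' :: l) = ∅ := by
      intro b' l hne
      rw [Set.eq_empty_iff_forall_notMem]
      rintro x ⟨⟨a, _, ha⟩, hx2⟩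
      exact hne (gdisj (Xw_range b' l hx2) ⟨a, ha⟩)
    have imgC : ∀ l, ev h v (b :: l) '' Cpre l = g b '' (A ∩ Xw l ∩ g b ⁻¹' B) := by
      intro l
      have hsub : A ∩ Xw l ∩ g b ⁻¹' B ⊆ Set.range (ev h v l) := by
        intro x hx
        rcases Xw_subset l hx.1.2 with ⟨a, _, ha⟩
        exact ⟨a, ha⟩
      have : ev h v (b :: l) '' Cpre l
          = g b '' (ev h v l '' (ev h v l ⁻¹' (A ∩ Xw l ∩ g b ⁻¹' B))) := Set.image_comp _ _ _
      rw [this, Set.image_preimage_eq_of_subset hsub]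
    have covC : g b '' A ∩ B = ⋃ l, ev h v (b :: l) '' Cpre l := by
      ext x
      constructor
      · rintro ⟨⟨a, haA, rfl⟩, hxB⟩
        rcases Xw_cover a with ⟨l, hal⟩
        exact Set.mem_iUnion.mpr ⟨l, by rw [imgC l]; exact ⟨a, ⟨⟨haA, hal⟩, hxB⟩, rfl⟩⟩
      · intro hx
        rcases Set.mem_iUnion.mp hx with ⟨l, hxl⟩
        rw [imgC l] at hxl
        rcases hxl with ⟨a, ⟨⟨haA, _⟩, haP⟩, rfl⟩
        exact ⟨⟨a, haA, rfl⟩, haP⟩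
    have disjC : Pairwise (Function.onFun Disjoint fun l => ev h v (b :: l) '' Cpre l) := by
      intro l l' hne
      show Disjoint (ev h v (b :: l) '' Cpre l) (ev h v (b :: l') '' Cpre l')
      rw [imgC l, imgC l']
      refine Set.disjoint_image_of_injective (ginj b) ?_
      exact Disjoint.mono (fun x hx => hx.1.2) (fun x hx => hx.1.2) (Xw_disj l l' hne)
    have sumC : μ (g b '' A ∩ B) = ∑' l, μ (Cpre l) := by
      rw [covC, measure_iUnion disjC (fun l => evim _ _ (hCm l))]
      refine tsum_congr fun l => ?_
      refine hμinv (Cpre l) (hCm l) ?_ (ev h v (b :: l)) (evmem _) ?_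
      · intro x hx
        exact evpreB l hx.1.2
      · rw [show ((ev h v (b :: l) : Function.End X) '' Cpre l)
            = ev h v (b :: l) '' Cpre l from rfl, imgC l]
        rintro x ⟨a, ha, rfl⟩
        exact ha.2
    set F : List Bool → ℝ≥0∞ := fun w => μ (ev h v w ⁻¹' (g b '' A ∩ Xw w)) with hF
    have hnil : F [] = ∑' l, μ (Cpre l) := by
      show μ (ev h v [] ⁻¹' (g b '' A ∩ Xw [])) = _
      rw [ev_nil, Set.preimage_id, Xw_nil]
      exact sumC
    have hsame : ∀ l, F (b :: l) = μ (Dpre l) := by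
      intro l
      show μ (ev h v (b :: l) ⁻¹' (g b '' A ∩ Xw (b :: l))) = _
      rw [stepD l]
    have hoth : ∀ l, F ((!b) :: l) = 0 := by
      intro l
      show μ (ev h v ((!b) :: l) ⁻¹' (g b '' A ∩ Xw ((!b) :: l))) = 0
      rw [stepO (!b) l (by cases b <;> simp), Set.preimage_empty, measure_empty]
    have e1 : ν (g b '' A) = F [] + ((∑' l, F (false :: l)) + (∑' l, F (true :: l))) := by
      rw [ν_apply _ hgA]
      rw [show (∑' w, μ (ev h v w ⁻¹' (g b '' A ∩ Xw w))) = ∑' w, F w from rfl,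
        tsum_list_bool F]
      congr 1
      calc ∑' p : Bool × List Bool, F (p.1 :: p.2)
          = ∑' (b' : Bool) (l : List Bool), F (b' :: l) := ENNReal.tsum_prod'
        _ = (∑' l, F (false :: l)) + (∑' l, F (true :: l)) :=
            tsum_bool fun b' => ∑' l, F (b' :: l)
    have e2 : (∑' l, F (false :: l)) + (∑' l, F (true :: l)) = ∑' l, μ (Dpre l) := by
      cases b
      · simp only [Bool.not_false] at hoth
        rw [tsum_congr hsame, tsum_congr hoth, tsum_zero, add_zero]
      · simp only [Bool.not_true] at hoth
        rw [tsum_congr hoth, tsum_congr hsame, tsum_zero, zero_add]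
    have piece : ∀ l, μ (Cpre l) + μ (Dpre l) = μ (ev h v l ⁻¹' (A ∩ Xw l)) := by
      intro l
      have hdCD : Disjoint (Cpre l) (Dpre l) := by
        rw [Set.disjoint_left]
        intro x hx hx'
        exact hx'.2 hx.2
      have hu : Cpre l ∪ Dpre l = ev h v l ⁻¹' (A ∩ Xw l) := by
        rw [hCpre, hDpre, ← Set.preimage_union, Set.inter_union_diff]
      rw [← measure_union hdCD (hDm l), hu]
    calc ν (g b '' A) = (∑' l, μ (Cpre l)) + ∑' l, μ (Dpre l) := by rw [e1, hnil, e2]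
      _ = ∑' l, (μ (Cpre l) + μ (Dpre l)) := ENNReal.tsum_add.symm
      _ = ∑' l, μ (ev h v l ⁻¹' (A ∩ Xw l)) := tsum_congr fun l => piece l
      _ = ν A := (ν_apply A hA).symm
  refine ⟨ν, ?_, ?_, ?_⟩
  · intro A hA hAB
    rw [ν_apply A hA]
    rw [tsum_eq_single ([] : List Bool)]
    · rw [Xw_nil, Set.inter_eq_self_of_subset_left hAB, ev_nil, Set.preimage_id]
    · intro w hw
      have h0 : A ∩ Xw w = ∅ := by
        rw [Set.eq_empty_iff_forall_notMem]
        rintro x ⟨hxA, hxw⟩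
        exact Set.eq_empty_iff_forall_notMem.mp (Xw_inter_B w hw) x ⟨hxw, hAB hxA⟩
      rw [h0, Set.preimage_empty, measure_empty]
  · intro A hA
    rw [← gT]
    exact main true A hA
  · intro A hA
    rw [← gF]
    exact main false A hA
end

section
/- Let σ(x) = sgn(x)|x|^α with α > 0, and for a ≥ 0 consider the curves c_a(x) = (x, a·x^α) for x > 0. Then h_σ maps the curve c_a onto the curve c_b reparametrized: h_σ(c_a(x)) = c_b((1 + a^{1/α})x) with b = a/(1 + a^{1/α})^α, and v_σ(c_a(x)) = c_{a+1}(x). -/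
noncomputable section

/-- σ_α(x) = sgn(x)·|x|^α (and its inverse is obtained with exponent 1/α). -/
def sgnpow (α x : ℝ) : ℝ := Real.sign x * |x| ^ α

def hα (α : ℝ) : ℝ × ℝ → ℝ × ℝ := fun p => (p.1 + sgnpow (1 / α) p.2, p.2)
def vα (α : ℝ) : ℝ × ℝ → ℝ × ℝ := fun p => (p.1, p.2 + sgnpow α p.1)

/-- The curve c_a(x) = (x, a·x^α), x > 0. -/
def curve (α a x : ℝ) : ℝ × ℝ := (x, a * x ^ α)

/-- h_σ maps the curve c_a onto c_b with b = a/(1+a^{1/α})^α, reparametrized by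
x ↦ (1+a^{1/α})x, and v_σ maps c_a onto c_{a+1}. -/
theorem stmt_18 (α : ℝ) (hα' : 0 < α) (a : ℝ) (ha : 0 ≤ a) (x : ℝ) (hx : 0 < x) :
    hα α (curve α a x) = curve α (a / (1 + a ^ (1 / α)) ^ α) ((1 + a ^ (1 / α)) * x) ∧
    vα α (curve α a x) = curve α (a + 1) x := by
  have hxα : (0:ℝ) < x ^ α := Real.rpow_pos_of_pos hx α
  have ht : (0:ℝ) ≤ a ^ (1 / α) := Real.rpow_nonneg ha _
  have h1t : (0:ℝ) < 1 + a ^ (1 / α) := by linarith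
  have h1tα : (0:ℝ) < (1 + a ^ (1 / α)) ^ α := Real.rpow_pos_of_pos h1t α
  constructor
  · rcases eq_or_lt_of_le ha with h0 | h0
    · subst h0
      have h0' : (α:ℝ)⁻¹ ≠ 0 := by positivity
      simp [hα, curve, sgnpow, Real.sign, Real.zero_rpow h0', one_div]
    · have hy : (0:ℝ) < a * x ^ α := mul_pos h0 hxα
      have hsign : Real.sign (a * x ^ α) = 1 := Real.sign_of_pos hy
      have habs : |a * x ^ α| = a * x ^ α := abs_of_pos hy
      have hkey : (a * x ^ α) ^ (1 / α) = a ^ (1 / α) * x := by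
        rw [Real.mul_rpow h0.le hxα.le, ← Real.rpow_mul hx.le,
          mul_one_div, div_self hα'.ne', Real.rpow_one]
      simp only [hα, curve, sgnpow, hsign, habs, hkey, one_mul, Prod.mk.injEq]
      constructor
      · ring
      · rw [Real.mul_rpow h1t.le hx.le]
        field_simp
  · have : Real.sign x = 1 := Real.sign_of_pos hx
    simp only [vα, curve, sgnpow, this, abs_of_pos hx, one_mul, Prod.mk.injEq]
    constructor
    · trivial
    · ring
end
end

section
/- Let σ₁, σ₂ : ℝ/ℤ → ℝ/ℤ be measurable, and define h(x,y) = (x + σ₂(y), y), v(x,y) = (x, y + σ₁(x)) on the torus 𝕋². Suppose the sets N₁ = σ₁⁻¹(ℚ/ℤ) and N₂ = σ₂⁻¹(ℚ/ℤ) have Haar measure zero. Then any finite measure μ on 𝕋² that is invariant under both h and v and absolutely continuous with respect to Haar measure λ_{𝕋²} is proportional to λ_{𝕋²}. -/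
/-!
Disintegrate `μ` along the first coordinate. Invariance under `v` makes almost every conditional
measure `μₓ` invariant under the rotation by `σ₁ x`, which is irrational for `μ.fst`-a.e. `x`
since `μ.fst ≪ λ`. A probability measure on the circle invariant under an irrational rotation has
vanishing nonzero Fourier coefficients, so it is `λ`; hence `μ = μ.fst ⊗ λ`. Symmetrically, `h`
gives `μ = λ ⊗ μ.snd`, and comparing the two decompositions forces `μ.fst` to be a multiple of `λ`.
-/

open MeasureTheory

def ratTorus : Set UnitAddCircle := {x | ∃ q : ℚ, ((q : ℝ) : UnitAddCircle) = x}

open ProbabilityTheory Set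
open scoped ENNReal

namespace AddCircle

variable {T : ℝ}

theorem fourier_apply_add (n : ℤ) (x a : AddCircle T) :
    fourier n (x + a) = fourier n x * fourier n a := by
  simp [fourier_apply, smul_add, toCircle_add]

variable [Fact (0 < T)]

theorem fourier_ne_one_of_not_isOfFinAddOrder {n : ℤ} (hn : n ≠ 0) {a : AddCircle T}
    (ha : ¬IsOfFinAddOrder a) : fourier n a ≠ 1 := by
  refine fun h ↦ ha <| isOfFinAddOrder_iff_zsmul_eq_zero.mpr
    ⟨n, hn, injective_toCircle (Fact.out : 0 < T).ne' ?_⟩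
  rw [toCircle_zero]
  ext1
  simpa [fourier_apply] using h

theorem measure_eq_of_forall_integral_fourier_eq {ν₁ ν₂ : Measure (AddCircle T)}
    [IsFiniteMeasure ν₁] [IsFiniteMeasure ν₂]
    (h : ∀ n : ℤ, ∫ x, fourier n x ∂ν₁ = ∫ x, fourier n x ∂ν₂) : ν₁ = ν₂ := by
  have hspan : ∀ g ∈ Submodule.span ℂ (range (fourier (T := T))),
      ∫ x, g x ∂ν₁ = ∫ x, g x ∂ν₂ := by
    have hint (g : C(AddCircle T, ℂ)) (ν : Measure (AddCircle T)) [IsFiniteMeasure ν] :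
        Integrable g ν :=
      g.continuous.integrable_of_hasCompactSupport (.of_compactSpace _)
    intro g hg
    induction hg using Submodule.span_induction with
    | mem g hg => obtain ⟨n, rfl⟩ := hg; exact h n
    | zero => simp
    | add g₁ g₂ _ _ h₁ h₂ =>
      simp only [ContinuousMap.add_apply]
      rw [integral_add (hint g₁ ν₁) (hint g₂ ν₁), integral_add (hint g₁ ν₂) (hint g₂ ν₂), h₁, h₂]
    | smul c g _ hg => simp only [ContinuousMap.smul_apply, smul_eq_mul, integral_const_mul, hg]
  refine ext_of_forall_mem_subalgebra_integral_eq_of_polish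
    (A := fourierSubalgebra.comap (BoundedContinuousFunction.toContinuousMapStarₐ ℂ)) ?_
    fun g hg ↦ hspan _ (by rw [← fourierSubalgebra_coe]; exact hg)
  intro x y hxy
  obtain ⟨_, ⟨g, hg, rfl⟩, hgxy⟩ := fourierSubalgebra_separatesPoints hxy
  exact ⟨g, ⟨g, ⟨BoundedContinuousFunction.mkOfCompact g, hg, rfl⟩, rfl⟩, hgxy⟩

theorem integral_fourier_eq_zero_of_map_add_eq {ν : Measure (AddCircle T)} {a : AddCircle T}
    (ha : ¬IsOfFinAddOrder a) (hν : ν.map (· + a) = ν) {n : ℤ} (hn : n ≠ 0) :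
    ∫ x, fourier n x ∂ν = 0 := by
  have hshift : ∫ x, fourier n x ∂ν = (∫ x, fourier n x ∂ν) * fourier n a := by
    conv_lhs => rw [← hν]
    rw [integral_map (measurable_add_const a).aemeasurable
      (map_continuous _).aestronglyMeasurable]
    simp_rw [fourier_apply_add, integral_mul_const]
  have hfactor : (∫ x, fourier n x ∂ν) * (fourier n a - 1) = 0 := by
    linear_combination -hshift
  exact (mul_eq_zero.mp hfactor).resolve_right
    (sub_ne_zero.mpr (fourier_ne_one_of_not_isOfFinAddOrder hn ha))

theorem measure_eq_of_map_add_eq {ν₁ ν₂ : Measure (AddCircle T)}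
    [IsFiniteMeasure ν₁] [IsFiniteMeasure ν₂] {a : AddCircle T} (ha : ¬IsOfFinAddOrder a)
    (h₁ : ν₁.map (· + a) = ν₁) (h₂ : ν₂.map (· + a) = ν₂) (huniv : ν₁ univ = ν₂ univ) :
    ν₁ = ν₂ := by
  refine measure_eq_of_forall_integral_fourier_eq fun n ↦ ?_
  rcases eq_or_ne n 0 with rfl | hn
  · simp [measureReal_def, huniv]
  · rw [integral_fourier_eq_zero_of_map_add_eq ha h₁ hn,
      integral_fourier_eq_zero_of_map_add_eq ha h₂ hn]

end AddCircle

namespace UnitAddCircle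

instance : IsProbabilityMeasure (volume : Measure UnitAddCircle) :=
  ⟨UnitAddCircle.measure_univ⟩

theorem eq_volume_of_map_add_eq {ν : Measure UnitAddCircle} [IsProbabilityMeasure ν]
    {a : UnitAddCircle} (ha : ¬IsOfFinAddOrder a) (h : ν.map (· + a) = ν) : ν = volume :=
  AddCircle.measure_eq_of_map_add_eq ha h (measurePreserving_add_right volume a).map_eq
    (by simp)

theorem isOfFinAddOrder_iff_mem_ratTorus {x : UnitAddCircle} :
    IsOfFinAddOrder x ↔ x ∈ ratTorus := by
  constructor
  · obtain ⟨r, rfl⟩ := QuotientAddGroup.mk_surjective x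
    intro h
    obtain ⟨q, hq⟩ := AddCircle.isOfFinAddOrder_iff_exists_rat_eq_div.mp h
    exact ⟨q, by rw [hq, div_one]⟩
  · rintro ⟨q, rfl⟩
    exact AddCircle.isOfFinAddOrder_iff_exists_rat_eq_div.mpr ⟨q, (div_one _).symm⟩

theorem ae_not_isOfFinAddOrder {α : Type*} [MeasurableSpace α] {ν ρ : Measure α}
    {σ : α → UnitAddCircle} (hνρ : ν ≪ ρ) (hσ : ρ (σ ⁻¹' ratTorus) = 0) :
    ∀ᵐ x ∂ν, ¬IsOfFinAddOrder (σ x) :=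
  hνρ.ae_le <| (measure_eq_zero_iff_ae_notMem.mp hσ).mono fun _ hx ↦
    isOfFinAddOrder_iff_mem_ratTorus.not.mpr hx

end UnitAddCircle

namespace ProbabilityTheory.Kernel

variable {α G : Type*} [MeasurableSpace α] [MeasurableSpace G] [Add G] [MeasurableAdd₂ G]

noncomputable def shift (κ : Kernel α G) [IsSFiniteKernel κ] {τ : α → G} (hτ : Measurable τ) :
    Kernel α G where
  toFun x := (κ x).map (· + τ x)
  measurable' := by
    refine Measure.measurable_of_measurable_coe _ fun s hs ↦ ?_
    convert Kernel.measurable_kernel_prodMk_left (κ := κ)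
      ((measurable_snd.add (hτ.comp measurable_fst)) hs) using 1
    ext x
    rw [Measure.map_apply (measurable_add_const (τ x)) hs]
    rfl

variable {κ : Kernel α G} [IsSFiniteKernel κ] {τ : α → G} (hτ : Measurable τ)

theorem shift_apply (x : α) : κ.shift hτ x = (κ x).map (· + τ x) := rfl

instance [IsFiniteKernel κ] : IsFiniteKernel (κ.shift hτ) :=
  ⟨⟨κ.bound, κ.bound_lt_top, fun x ↦ by
    rw [shift_apply, Measure.map_apply (measurable_add_const _) .univ]
    exact κ.measure_le_bound x _⟩⟩

end ProbabilityTheory.Kernel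

namespace MeasureTheory.Measure

theorem map_shear_compProd {α G : Type*} [MeasurableSpace α] [MeasurableSpace G] [Add G]
    [MeasurableAdd₂ G] (ν : Measure α) [SFinite ν] (κ : Kernel α G) [IsFiniteKernel κ]
    {τ : α → G} (hτ : Measurable τ) :
    (ν ⊗ₘ κ).map (fun p ↦ (p.1, p.2 + τ p.1)) = ν ⊗ₘ κ.shift hτ := by
  have hshear : Measurable fun p : α × G ↦ (p.1, p.2 + τ p.1) :=
    measurable_fst.prodMk (measurable_snd.add (hτ.comp measurable_fst))
  ext s hs
  rw [map_apply hshear hs, compProd_apply (hshear hs), compProd_apply hs]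
  refine lintegral_congr fun x ↦ ?_
  rw [Kernel.shift_apply, map_apply (measurable_add_const (τ x)) (measurable_prodMk_left hs)]
  rfl

theorem eq_smul_prod_of_eq_prod {α β : Type*} [MeasurableSpace α] [MeasurableSpace β]
    {μ : Measure (α × β)} [SFinite μ] {m₁ : Measure α} {m₂ : Measure β}
    [IsProbabilityMeasure m₁] [IsProbabilityMeasure m₂]
    (h₁ : μ = μ.fst.prod m₂) (h₂ : μ = m₁.prod μ.snd) : μ = μ univ • m₁.prod m₂ := by
  have hfst : μ.fst = μ univ • m₁ := by
    ext s hs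
    conv_lhs => rw [h₂]
    rw [fst_apply hs, ← prod_univ, prod_prod, snd_univ, smul_apply, smul_eq_mul, mul_comm]
  calc μ = μ.fst.prod m₂ := h₁
    _ = μ univ • m₁.prod m₂ := by rw [hfst, prod_smul_left]

end MeasureTheory.Measure

namespace UnitAddCircle

variable {α : Type*} [MeasurableSpace α] {τ : α → UnitAddCircle}

theorem eq_fst_prod_volume_of_map_shear_eq {μ : Measure (α × UnitAddCircle)} [IsFiniteMeasure μ]
    (hτ : Measurable τ) (hμ : μ.map (fun p ↦ (p.1, p.2 + τ p.1)) = μ)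
    (hirr : ∀ᵐ x ∂μ.fst, ¬IsOfFinAddOrder (τ x)) : μ = μ.fst.prod volume := by
  have hshift : μ = μ.fst ⊗ₘ μ.condKernel.shift hτ := by
    conv_lhs => rw [← hμ, ← μ.disintegrate μ.condKernel]
    exact Measure.map_shear_compProd _ _ hτ
  have hker : μ.condKernel =ᵐ[μ.fst] Kernel.const α volume := by
    filter_upwards [eq_condKernel_of_measure_eq_compProd _ hshift, hirr] with x hx hxirr
    exact eq_volume_of_map_add_eq hxirr hx
  calc μ = μ.fst ⊗ₘ μ.condKernel := (μ.disintegrate _).symm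
    _ = μ.fst ⊗ₘ Kernel.const α volume := Measure.compProd_congr hker
    _ = μ.fst.prod volume := Measure.compProd_const

theorem eq_volume_prod_snd_of_map_shear_eq {μ : Measure (UnitAddCircle × α)} [IsFiniteMeasure μ]
    (hτ : Measurable τ) (hμ : μ.map (fun p ↦ (p.1 + τ p.2, p.2)) = μ)
    (hirr : ∀ᵐ y ∂μ.snd, ¬IsOfFinAddOrder (τ y)) : μ = volume.prod μ.snd := by
  have hswap : (μ.map Prod.swap).map (fun p ↦ (p.1, p.2 + τ p.1)) = μ.map Prod.swap := by
    conv_rhs => rw [← hμ]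
    rw [Measure.map_map (by fun_prop) measurable_swap,
      Measure.map_map measurable_swap (by fun_prop)]
    rfl
  have hprod := eq_fst_prod_volume_of_map_shear_eq hτ hswap (by rwa [Measure.fst_map_swap])
  rw [Measure.fst_map_swap] at hprod
  calc μ = (μ.map Prod.swap).map Prod.swap := by
        rw [Measure.map_map measurable_swap measurable_swap, Prod.swap_swap_eq, Measure.map_id]
    _ = volume.prod μ.snd := by rw [hprod, Measure.prod_swap]

end UnitAddCircle

/-- If σ₁⁻¹(ℚ/ℤ) and σ₂⁻¹(ℚ/ℤ) are Haar-null, then every finite measure on 𝕋²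
invariant under h(x,y) = (x+σ₂(y), y) and v(x,y) = (x, y+σ₁(x)) and absolutely
continuous w.r.t. Haar measure is proportional to Haar measure. -/
theorem stmt_19 (σ₁ σ₂ : UnitAddCircle → UnitAddCircle)
    (hσ₁ : Measurable σ₁) (hσ₂ : Measurable σ₂)
    (hN₁ : volume (σ₁ ⁻¹' ratTorus) = 0) (hN₂ : volume (σ₂ ⁻¹' ratTorus) = 0)
    (μ : Measure (UnitAddCircle × UnitAddCircle)) [IsFiniteMeasure μ]
    (hμh : μ.map (fun p => (p.1 + σ₂ p.2, p.2)) = μ)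
    (hμv : μ.map (fun p => (p.1, p.2 + σ₁ p.1)) = μ)
    (hac : μ ≪ (volume : Measure (UnitAddCircle × UnitAddCircle))) :
    ∃ c : NNReal, μ = c • (volume : Measure (UnitAddCircle × UnitAddCircle)) := by
  rw [Measure.volume_eq_prod] at hac ⊢
  have hfst : μ.fst ≪ volume := by
    have h := hac.map measurable_fst
    rwa [Measure.map_fst_prod, measure_univ, one_smul] at h
  have hsnd : μ.snd ≪ volume := by
    have h := hac.map measurable_snd
    rwa [Measure.map_snd_prod, measure_univ, one_smul] at h
  have hv := UnitAddCircle.eq_fst_prod_volume_of_map_shear_eq hσ₁ hμv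
    (UnitAddCircle.ae_not_isOfFinAddOrder hfst hN₁)
  have hh := UnitAddCircle.eq_volume_prod_snd_of_map_shear_eq hσ₂ hμh
    (UnitAddCircle.ae_not_isOfFinAddOrder hsnd hN₂)
  refine ⟨(μ univ).toNNReal, ?_⟩
  rw [ENNReal.smul_def, ENNReal.coe_toNNReal (measure_ne_top μ univ)]
  exact Measure.eq_smul_prod_of_eq_prod hv hh
end
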